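/- arXiv:0802.0467 — 2 statements merged into one kernel-verified Lean document; each statement's English description precedes it below -/
import Mathlib

section
/- There are constants K₂ and K₃ depending only on δ (one may take K₂ = 27δ and K₃ = 18δ) with the following property: if z is a point whose nearest point projection p to a geodesic [x,y] satisfies d(p,x) ≥ (1/2)·d(x,y) + K₂, then for every point a in the halfspace H(y,x), every nearest point projection of a to any geodesic [x,z] lies at distance at most (1/2)·d(x,y) + K₃ from x. -/
open Metric Set

/-- `G` is a geodesic segment from `x` to `y`: the image of an isometric embedding of
the interval `[0, dist x y]` sending the endpoints to `x` and `y`. -/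
def IsGeodesic {X : Type*} [MetricSpace X] (G : Set X) (x y : X) : Prop :=
  ∃ f : ℝ → X, f 0 = x ∧ f (dist x y) = y ∧
    (∀ s ∈ Set.Icc (0 : ℝ) (dist x y), ∀ t ∈ Set.Icc (0 : ℝ) (dist x y),
      dist (f s) (f t) = |s - t|) ∧
    f '' Set.Icc (0 : ℝ) (dist x y) = G

/-- The closed `K`-neighbourhood of a set `S`: all points within distance `K` of `S`. -/
def nbhd {X : Type*} [MetricSpace X] (K : ℝ) (S : Set X) : Set X :=
  {w | Metric.infDist w S ≤ K}

/-- The space is geodesic: any two points are joined by a geodesic segment. -/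
def GeodesicSpace (X : Type*) [MetricSpace X] : Prop :=
  ∀ x y : X, ∃ G : Set X, IsGeodesic G x y

/-- Every geodesic triangle is `δ`-slim: each side is contained in the
`δ`-neighbourhood of the union of the other two sides. -/
def SlimTriangles (δ : ℝ) (X : Type*) [MetricSpace X] : Prop :=
  ∀ (x y z : X) (Gxy Gyz Gzx : Set X),
    IsGeodesic Gxy x y → IsGeodesic Gyz y z → IsGeodesic Gzx z x →
    Gxy ⊆ nbhd δ (Gyz ∪ Gzx)

/-- `p` is a nearest point on `S` to `z`. -/
def NearestPoint {X : Type*} [MetricSpace X] (S : Set X) (z p : X) : Prop :=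
  p ∈ S ∧ dist z p = Metric.infDist z S

/-- The halfspace `H(a,b)`: points at least as close to `b` as to `a`. -/
def Halfspace {X : Type*} [MetricSpace X] (a b : X) : Set X :=
  {w | dist w b ≤ dist w a}

section Aux

lemma dist_param {X : Type*} [MetricSpace X] {f : ℝ → X} {x y : X} (h0 : f 0 = x)
    (hiso : ∀ s ∈ Set.Icc (0 : ℝ) (dist x y), ∀ t ∈ Set.Icc (0 : ℝ) (dist x y),
      dist (f s) (f t) = |s - t|)
    {t : ℝ} (ht : t ∈ Set.Icc (0 : ℝ) (dist x y)) : dist x (f t) = t := by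
  have h := hiso 0 ⟨le_refl _, dist_nonneg⟩ t ht
  rw [h0] at h
  rw [h, abs_sub_comm, sub_zero, abs_of_nonneg ht.1]

lemma dist_param' {X : Type*} [MetricSpace X] {f : ℝ → X} {x y : X} (hL : f (dist x y) = y)
    (hiso : ∀ s ∈ Set.Icc (0 : ℝ) (dist x y), ∀ t ∈ Set.Icc (0 : ℝ) (dist x y),
      dist (f s) (f t) = |s - t|)
    {t : ℝ} (ht : t ∈ Set.Icc (0 : ℝ) (dist x y)) : dist (f t) y = dist x y - t := by
  have h := hiso t ht (dist x y) ⟨dist_nonneg, le_refl _⟩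
  rw [hL] at h
  rw [h, abs_of_nonpos (by linarith [ht.2]), neg_sub]


variable {X : Type*} [MetricSpace X]

lemma IsGeodesic.left_mem {G : Set X} {x y : X} (h : IsGeodesic G x y) : x ∈ G := by
  obtain ⟨f, h0, hL, _, himg⟩ := h
  rw [← himg]
  exact ⟨0, ⟨le_refl _, dist_nonneg⟩, h0⟩

lemma IsGeodesic.right_mem {G : Set X} {x y : X} (h : IsGeodesic G x y) : y ∈ G := by
  obtain ⟨f, h0, hL, _, himg⟩ := h
  rw [← himg]
  exact ⟨dist x y, ⟨dist_nonneg, le_refl _⟩, hL⟩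

lemma IsGeodesic.nonempty {G : Set X} {x y : X} (h : IsGeodesic G x y) : G.Nonempty :=
  ⟨x, h.left_mem⟩

lemma IsGeodesic.symm {G : Set X} {x y : X} (h : IsGeodesic G x y) : IsGeodesic G y x := by
  obtain ⟨f, h0, hL, hiso, himg⟩ := h
  have hd : dist y x = dist x y := dist_comm y x
  refine ⟨fun t => f (dist x y - t), by simp [hd, hL], by simp [hd, h0], ?_, ?_⟩
  · intro s hs t ht
    rw [hd] at hs ht
    rw [hiso _ ⟨by linarith [hs.2], by linarith [hs.1]⟩ _ ⟨by linarith [ht.2], by linarith [ht.1]⟩]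
    rw [abs_sub_comm]
    congr 1
    ring
  · rw [hd, ← himg]
    ext w
    constructor
    · rintro ⟨t, ht, rfl⟩
      exact ⟨dist x y - t, ⟨by linarith [ht.2], by linarith [ht.1]⟩, rfl⟩
    · rintro ⟨t, ht, rfl⟩
      exact ⟨dist x y - t, ⟨by linarith [ht.2], by linarith [ht.1]⟩, by show f (dist x y - (dist x y - t)) = f t; rw [sub_sub_cancel]⟩

lemma IsGeodesic.compact {G : Set X} {x y : X} (h : IsGeodesic G x y) : IsCompact G := by
  obtain ⟨f, h0, hL, hiso, himg⟩ := h
  rw [← himg]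
  refine isCompact_Icc.image_of_continuousOn ?_
  have : LipschitzOnWith 1 f (Icc 0 (dist x y)) := by
    apply LipschitzOnWith.of_dist_le_mul
    intro s hs t ht
    rw [hiso s hs t ht]
    simp [Real.dist_eq]
  exact this.continuousOn

/-- Any point of a geodesic splits the distance. -/
lemma IsGeodesic.dist_add {G : Set X} {x y : X} (h : IsGeodesic G x y) {w : X} (hw : w ∈ G) :
    dist x w + dist w y = dist x y := by
  obtain ⟨f, h0, hL, hiso, himg⟩ := h
  rw [← himg] at hw
  obtain ⟨t, ht, rfl⟩ := hw
  rw [dist_param h0 hiso ht, dist_param' hL hiso ht]; ring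

/-- The distance between two points of a geodesic is the difference of their distances
to the endpoint. -/
lemma IsGeodesic.dist_mem_mem {G : Set X} {x y : X} (h : IsGeodesic G x y) {w w' : X}
    (hw : w ∈ G) (hw' : w' ∈ G) : dist w w' = |dist x w - dist x w'| := by
  obtain ⟨f, h0, hL, hiso, himg⟩ := h
  rw [← himg] at hw hw'
  obtain ⟨t, ht, rfl⟩ := hw
  obtain ⟨t', ht', rfl⟩ := hw'
  rw [dist_param h0 hiso ht, dist_param h0 hiso ht', hiso t ht t' ht']

/-- A sub-geodesic between two points of a geodesic. -/
lemma IsGeodesic.sub_geodesic {G : Set X} {x y : X} (h : IsGeodesic G x y) {w w' : X}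
    (hw : w ∈ G) (hw' : w' ∈ G) : ∃ G' ⊆ G, IsGeodesic G' w w' := by
  -- reduce to the ordered case
  have key : ∀ w w' : X, ∀ hw : w ∈ G, ∀ hw' : w' ∈ G,
      dist x w ≤ dist x w' → ∃ G' ⊆ G, IsGeodesic G' w w' := by
    clear hw hw' w w'
    intro w w' hw hw' hord
    obtain ⟨f, h0, hL, hiso, himg⟩ := h
    rw [← himg] at hw hw'
    obtain ⟨t, ht, rfl⟩ := hw
    obtain ⟨t', ht', rfl⟩ := hw'
    rw [dist_param h0 hiso ht, dist_param h0 hiso ht'] at hord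
    have hdist : dist (f t) (f t') = t' - t := by
      rw [hiso t ht t' ht', abs_of_nonpos (by linarith), neg_sub]
    refine ⟨(fun r => f (t + r)) '' Icc 0 (dist (f t) (f t')), ?_, ?_⟩
    · rw [← himg]
      rintro _ ⟨r, hr, rfl⟩
      rw [hdist] at hr
      exact ⟨t + r, ⟨by linarith [ht.1, hr.1], by linarith [hr.2, ht'.2]⟩, rfl⟩
    · refine ⟨fun r => f (t + r), by simp, by rw [hdist]; ring_nf, ?_, rfl⟩
      intro s hs r hr
      rw [hdist] at hs hr
      rw [hiso (t + s) ⟨by linarith [ht.1, hs.1], by linarith [hs.2, ht'.2]⟩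
        (t + r) ⟨by linarith [ht.1, hr.1], by linarith [hr.2, ht'.2]⟩]
      congr 1; ring
  rcases le_total (dist x w) (dist x w') with hord | hord
  · exact key w w' hw hw' hord
  · obtain ⟨G', hsub, hG'⟩ := key w' w hw' hw hord
    exact ⟨G', hsub, hG'.symm⟩

/-- If the infimum distance to a compact nonempty set is at most `c`, there is a point
of the set within distance `c`. -/
lemma exists_near {S : Set X} (hS : IsCompact S) (hne : S.Nonempty) {w : X} {c : ℝ}
    (h : Metric.infDist w S ≤ c) : ∃ v ∈ S, dist w v ≤ c := by
  obtain ⟨v, hv, heq⟩ := hS.exists_infDist_eq_dist hne w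
  exact ⟨v, hv, heq ▸ h⟩

/-- Lower bounds for infDist on compact sets. -/
lemma le_infDist_of {S : Set X} (hS : IsCompact S) (hne : S.Nonempty) {w : X} {b : ℝ}
    (h : ∀ v ∈ S, b ≤ dist w v) : b ≤ Metric.infDist w S := by
  obtain ⟨v, hv, heq⟩ := hS.exists_infDist_eq_dist hne w
  rw [heq]; exact h v hv

/-- Connectedness/crossing lemma: on a geodesic from `x` to `y` covered by the
`c`-neighbourhood of `α ∪ β` with `x ∈ α`, `y ∈ β`, there is a point of the geodesic
`c`-close to both `α` and `β`. -/
lemma crossing {G : Set X} {x y : X} (hG : IsGeodesic G x y) {α β : Set X}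
    (hα : IsCompact α) (hβ : IsCompact β) (hαne : α.Nonempty) (hβne : β.Nonempty)
    (hxα : x ∈ α) (hyβ : y ∈ β) {c : ℝ} (hc : 0 ≤ c)
    (hcov : ∀ w ∈ G, Metric.infDist w (α ∪ β) ≤ c) :
    ∃ w ∈ G, (∃ va ∈ α, dist w va ≤ c) ∧ (∃ vb ∈ β, dist w vb ≤ c) := by
  obtain ⟨f, h0, hL, hiso, himg⟩ := hG
  set L := dist x y with hLdef
  have hL0 : (0:ℝ) ≤ L := dist_nonneg
  have hmem : ∀ t ∈ Icc (0:ℝ) L, f t ∈ G := by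
    intro t ht; rw [← himg]; exact ⟨t, ht, rfl⟩
  set A : Set ℝ := {t | t ∈ Icc (0:ℝ) L ∧ Metric.infDist (f t) α ≤ c} with hA
  have hA0 : (0:ℝ) ∈ A := by
    refine ⟨⟨le_refl _, hL0⟩, ?_⟩
    rw [h0, infDist_zero_of_mem hxα]; exact hc
  have hAne : A.Nonempty := ⟨0, hA0⟩
  have hAbdd : BddAbove A := ⟨L, fun t ht => ht.1.2⟩
  set t₀ := sSup A with ht₀def
  have ht₀mem : t₀ ∈ Icc (0:ℝ) L := ⟨le_csSup hAbdd hA0, csSup_le hAne fun t ht => ht.1.2⟩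
  -- Lipschitz continuity of infDist along the geodesic
  have hlip : ∀ s ∈ Icc (0:ℝ) L, ∀ t ∈ Icc (0:ℝ) L, ∀ S : Set X,
      Metric.infDist (f s) S ≤ Metric.infDist (f t) S + |s - t| := by
    intro s hs t ht S
    calc Metric.infDist (f s) S ≤ Metric.infDist (f t) S + dist (f s) (f t) :=
          infDist_le_infDist_add_dist
    _ = Metric.infDist (f t) S + |s - t| := by rw [hiso s hs t ht]
  have hclaim1 : Metric.infDist (f t₀) α ≤ c := by
    apply le_of_forall_pos_le_add
    intro ε hε
    obtain ⟨t, htA, htlt⟩ := exists_lt_of_lt_csSup hAne (by linarith : t₀ - ε < t₀)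
    have hle : t ≤ t₀ := le_csSup hAbdd htA
    calc Metric.infDist (f t₀) α ≤ Metric.infDist (f t) α + |t₀ - t| :=
          hlip t₀ ht₀mem t htA.1 α
    _ ≤ c + ε := by
          have : |t₀ - t| ≤ ε := by rw [abs_of_nonneg (by linarith)]; linarith
          linarith [htA.2]
  have hclaim2 : Metric.infDist (f t₀) β ≤ c := by
    rcases eq_or_lt_of_le ht₀mem.2 with heq | hlt
    · rw [heq, hL]
      rw [infDist_zero_of_mem hyβ]; exact hc
    · apply le_of_forall_pos_le_add
      intro ε hε
      set t := min (t₀ + ε) L with htdef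
      have ht1 : t₀ < t := lt_min (by linarith) hlt
      have htIcc : t ∈ Icc (0:ℝ) L := ⟨le_trans ht₀mem.1 (le_of_lt ht1), min_le_right _ _⟩
      have htnotA : t ∉ A := fun hmemA => absurd (le_csSup hAbdd hmemA) (not_le.2 ht1)
      have htα : ¬ Metric.infDist (f t) α ≤ c := fun hcon => htnotA ⟨htIcc, hcon⟩
      have htβ : Metric.infDist (f t) β ≤ c := by
        obtain ⟨v, hv, hvd⟩ := exists_near (hα.union hβ) (hαne.mono subset_union_left)
          (hcov (f t) (hmem t htIcc))
        rcases hv with hv | hv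
        · exact absurd (le_trans (infDist_le_dist_of_mem hv) hvd) htα
        · exact le_trans (infDist_le_dist_of_mem hv) hvd
      calc Metric.infDist (f t₀) β ≤ Metric.infDist (f t) β + |t₀ - t| :=
            hlip t₀ ht₀mem t htIcc β
      _ ≤ c + ε := by
            have : |t₀ - t| ≤ ε := by
              rw [abs_of_nonpos (by linarith)]
              have := min_le_left (t₀ + ε) L
              simp only [htdef] at *
              linarith [this]
            linarith
  exact ⟨f t₀, hmem t₀ ht₀mem, exists_near hα hαne hclaim1, exists_near hβ hβne hclaim2⟩

variable {δ : ℝ}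

/-- The fundamental projection lemma: the concatenation through a nearest point is
almost geodesic. -/
lemma proj_lemma (hδ : 0 ≤ δ) (hGeo : GeodesicSpace X) (hyp : SlimTriangles δ X)
    {G : Set X} {x y z p : X} (hG : IsGeodesic G x y) (hp : NearestPoint G z p) :
    ∀ w ∈ G, dist z p + dist p w ≤ dist z w + 6 * δ := by
  intro w hw
  obtain ⟨β, hβsub, hβ⟩ := hG.sub_geodesic hp.1 hw
  obtain ⟨α, hα⟩ := hGeo z p
  obtain ⟨γ, hγ⟩ := hGeo z w
  have hcov : ∀ u ∈ γ, Metric.infDist u (α ∪ β) ≤ δ := by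
    intro u hu
    have := hyp z w p γ β α hγ hβ.symm hα.symm
    have h2 : Metric.infDist u (β ∪ α) ≤ δ := this hu
    rwa [union_comm] at h2
  obtain ⟨w₀, hw₀γ, ⟨va, hva, hva_d⟩, ⟨vb, hvb, hvb_d⟩⟩ :=
    crossing hγ hα.compact hβ.compact hα.nonempty hβ.nonempty hα.left_mem hβ.right_mem hδ hcov
  have hsplit1 : dist z w₀ + dist w₀ w = dist z w := hγ.dist_add hw₀γ
  have hsplit2 : dist z va + dist va p = dist z p := hα.dist_add hva
  have hnear : dist z p ≤ dist z vb := by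
    rw [hp.2]; exact infDist_le_dist_of_mem (hβsub hvb)
  -- dist z w₀ ≥ dist z p - δ
  have h1 : dist z p - δ ≤ dist z w₀ := by
    have := dist_triangle z w₀ vb
    linarith
  have h2 : dist z w₀ - δ ≤ dist z va := by
    have := dist_triangle z va w₀
    have := dist_comm va w₀
    linarith [dist_triangle z va w₀, dist_comm va w₀, hva_d]
  have h3 : dist va p ≤ 2 * δ := by linarith
  have h4 : dist w₀ p ≤ 3 * δ := by
    calc dist w₀ p ≤ dist w₀ va + dist va p := dist_triangle _ _ _
    _ ≤ 3 * δ := by linarith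
  have h5 : dist z p ≤ dist z w₀ + 3 * δ := by
    have := dist_triangle z w₀ p; linarith
  have h6 : dist p w ≤ dist w₀ w + 3 * δ := by
    have := dist_triangle p w₀ w
    have := dist_comm p w₀
    linarith
  linarith

/-- A point on a geodesic from `z` to its nearest point `p` also has `p` as nearest
point. -/
lemma nearest_extend {G : Set X} (hGc : IsCompact G) (hne : G.Nonempty) {z p v : X}
    (hp : NearestPoint G z p) (hsplit : dist z v + dist v p = dist z p) :
    NearestPoint G v p := by
  refine ⟨hp.1, le_antisymm ?_ ?_⟩
  · apply le_infDist_of hGc hne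
    intro w hw
    have h1 : dist z p ≤ dist z w := by
      rw [hp.2]; exact infDist_le_dist_of_mem hw
    have := dist_triangle z v w
    linarith
  · exact infDist_le_dist_of_mem hp.1

/-- Four-point lemma: if the projections of `a` and `z` to a geodesic are far apart,
then the geodesic between them passes near both projections. -/
lemma four_point (hδ : 0 ≤ δ) (hGeo : GeodesicSpace X) (hyp : SlimTriangles δ X)
    {G : Set X} {x y a z r p : X} (hG : IsGeodesic G x y)
    (hr : NearestPoint G a r) (hp : NearestPoint G z p) :
    dist r p ≤ 14 * δ ∨ dist a r + dist r p + dist p z ≤ dist a z + 18 * δ := by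
  obtain ⟨Gar, hGar⟩ := hGeo a r
  obtain ⟨Gzp, hGzp⟩ := hGeo z p
  obtain ⟨Grp, hGrpsub, hGrp⟩ := hG.sub_geodesic hr.1 hp.1
  obtain ⟨Gap, hGap⟩ := hGeo a p
  obtain ⟨Gaz, hGaz⟩ := hGeo a z
  -- coverage of Gaz by the 2δ-neighbourhood of Gar ∪ (Gzp ∪ Grp)
  have hcov : ∀ w ∈ Gaz, Metric.infDist w (Gar ∪ (Gzp ∪ Grp)) ≤ 2 * δ := by
    intro w hw
    have h1 : Metric.infDist w (Gzp ∪ Gap) ≤ δ := hyp a z p Gaz Gzp Gap hGaz hGzp hGap.symm hw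
    obtain ⟨v, hv, hvd⟩ := exists_near (hGzp.compact.union hGap.compact)
      (hGzp.nonempty.mono subset_union_left) h1
    rcases hv with hv | hv
    · refine le_trans (infDist_le_dist_of_mem (mem_union_right _ (mem_union_left _ hv))) ?_
      linarith
    · have h2 : Metric.infDist v (Gar ∪ Grp) ≤ δ :=
        hyp p a r Gap Gar Grp hGap.symm hGar hGrp hv
      obtain ⟨v', hv', hvd'⟩ := exists_near (hGar.compact.union hGrp.compact)
        (hGar.nonempty.mono subset_union_left) h2
      have hd : dist w v' ≤ 2 * δ := by
        calc dist w v' ≤ dist w v + dist v v' := dist_triangle _ _ _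
        _ ≤ 2 * δ := by linarith
      rcases hv' with hv' | hv'
      · exact le_trans (infDist_le_dist_of_mem (mem_union_left _ hv')) hd
      · exact le_trans (infDist_le_dist_of_mem (mem_union_right _ (mem_union_right _ hv'))) hd
  obtain ⟨w₀, hw₀, ⟨va, hva, hva_d⟩, ⟨vb, hvb, hvb_d⟩⟩ :=
    crossing hGaz hGar.compact (hGzp.compact.union hGrp.compact) hGar.nonempty
      (hGzp.nonempty.mono subset_union_left) hGar.left_mem
      (mem_union_left _ hGzp.left_mem) (by linarith) hcov
  have hsplitaz : dist a w₀ + dist w₀ z = dist a z := hGaz.dist_add hw₀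
  have hsplita : dist a va + dist va r = dist a r := hGar.dist_add hva
  have hva_near : NearestPoint G va r := nearest_extend hG.compact hG.nonempty hr hsplita
  rcases hvb with hvb | hvb
  · -- vb ∈ Gzp : p nearest of vb; derive dist r p ≤ 14δ
    left
    have hsplitb : dist z vb + dist vb p = dist z p := hGzp.dist_add hvb
    have hvb_near : NearestPoint G vb p := nearest_extend hG.compact hG.nonempty hp hsplitb
    have h1 : dist vb p ≤ dist vb r := by
      rw [hvb_near.2]; exact infDist_le_dist_of_mem hr.1
    have h2 : dist vb r ≤ dist vb w₀ + dist w₀ va + dist va r := by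
      calc dist vb r ≤ dist vb w₀ + dist w₀ r := dist_triangle _ _ _
      _ ≤ dist vb w₀ + (dist w₀ va + dist va r) := by linarith [dist_triangle w₀ va r]
      _ = dist vb w₀ + dist w₀ va + dist va r := by ring
    have h3 : dist va r + dist r p ≤ dist va p + 6 * δ :=
      proj_lemma hδ hGeo hyp hG hva_near p hp.1
    have h4 : dist va p ≤ dist va w₀ + dist w₀ vb + dist vb p := by
      calc dist va p ≤ dist va w₀ + dist w₀ p := dist_triangle _ _ _
      _ ≤ dist va w₀ + (dist w₀ vb + dist vb p) := by linarith [dist_triangle w₀ vb p]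
      _ = dist va w₀ + dist w₀ vb + dist vb p := by ring
    have hc1 : dist vb w₀ = dist w₀ vb := dist_comm _ _
    have hc2 : dist w₀ va = dist va w₀ := dist_comm _ _
    linarith
  · -- vb ∈ Grp ⊆ G : w₀ is near r
    right
    have h1 : dist va r ≤ dist va vb := by
      rw [hva_near.2]; exact infDist_le_dist_of_mem (hGrpsub hvb)
    have h2 : dist va vb ≤ dist va w₀ + dist w₀ vb := dist_triangle _ _ _
    have h3 : dist va r ≤ 4 * δ := by
      have := dist_comm va w₀; linarith
    have h4 : dist w₀ r ≤ 6 * δ := by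
      calc dist w₀ r ≤ dist w₀ va + dist va r := dist_triangle _ _ _
      _ ≤ 6 * δ := by linarith
    have h5 : dist z p + dist p r ≤ dist z r + 6 * δ :=
      proj_lemma hδ hGeo hyp hG hp r hr.1
    have h6 : dist a r ≤ dist a w₀ + dist w₀ r := dist_triangle _ _ _
    have h7 : dist z r ≤ dist z w₀ + dist w₀ r := dist_triangle _ _ _
    have hc1 : dist z w₀ = dist w₀ z := dist_comm _ _
    have hc2 : dist p z = dist z p := dist_comm _ _
    have hc3 : dist r p = dist p r := dist_comm _ _
    linarith

end Aux

/-- There are constants K₂ and K₃ depending only on δ such that: if z has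
nearest point projection p to a geodesic [x,y] with d(p,x) ≥ (1/2)d(x,y) + K₂, then for
every a ∈ H(y,x), every nearest point projection of a to any geodesic [x,z] lies within
distance (1/2)d(x,y) + K₃ of x. -/
theorem stmt_8 {X : Type*} [MetricSpace X] (δ : ℝ) (hδ : 0 ≤ δ)
    (hGeo : GeodesicSpace X) (hyp : SlimTriangles δ X) :
    ∃ K₂ K₃ : ℝ,
      ∀ (x y z : X) (Gxy : Set X), IsGeodesic Gxy x y →
        ∀ p : X, NearestPoint Gxy z p → (1 / 2) * dist x y + K₂ ≤ dist p x →
          ∀ a ∈ Halfspace y x, ∀ Gxz : Set X, IsGeodesic Gxz x z →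
            ∀ q : X, NearestPoint Gxz a q → dist q x ≤ (1 / 2) * dist x y + K₃ := by
  refine ⟨100 * δ + 100, 100 * δ + 100, ?_⟩
  intro x y z Gxy hGxy p hp hP a ha Gxz hGxz q hq
  have ha' : dist a x ≤ dist a y := ha
  set L := dist x y with hLdef
  have hL0 : (0:ℝ) ≤ L := dist_nonneg
  have hpx : dist p x = dist x p := dist_comm p x
  -- distances along Gxy
  have hpadd : dist x p + dist p y = L := hGxy.dist_add hp.1
  -- projection lemma for z
  have hL1z := proj_lemma hδ hGeo hyp hGxy hp
  -- nearest point r of a on Gxy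
  obtain ⟨r, hrmem, hreq⟩ := hGxy.compact.exists_infDist_eq_dist hGxy.nonempty a
  have hr : NearestPoint Gxy a r := ⟨hrmem, hreq.symm⟩
  have hL1a := proj_lemma hδ hGeo hyp hGxy hr
  have hradd : dist x r + dist r y = L := hGxy.dist_add hr.1
  -- c₀ ≤ L/2 + 3δ
  have hc0 : dist x r ≤ L / 2 + 3 * δ := by
    have h1 := hL1a x hGxy.left_mem
    have h2 : dist a y ≤ dist a r + dist r y := dist_triangle _ _ _
    have h3 : dist r x = dist x r := dist_comm r x
    have h4 : dist a x = dist x a := dist_comm a x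
    have h5 : dist x a ≤ dist a x := le_of_eq (dist_comm x a)
    linarith
  -- lower bound for d(x,z)
  have hDz : dist x p + dist p z ≤ dist x z + 6 * δ := by
    have h1 := hL1z x hGxy.left_mem
    have := dist_comm z p; have := dist_comm p x; have := dist_comm z x
    linarith
  have hD : L / 2 + 94 * δ + 100 ≤ dist x z := by
    have := dist_nonneg (x := p) (y := z)
    linarith
  -- the point u on Gxz at distance L/2 from x
  obtain ⟨g, hg0, hgL, hgiso, hgimg⟩ := hGxz
  have hGxz' : IsGeodesic Gxz x z := ⟨g, hg0, hgL, hgiso, hgimg⟩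
  have hmIcc : L / 2 ∈ Icc (0:ℝ) (dist x z) := ⟨by linarith, by linarith⟩
  set u := g (L / 2) with hudef
  have huG : u ∈ Gxz := by rw [← hgimg]; exact ⟨L / 2, hmIcc, rfl⟩
  have hxu : dist x u = L / 2 := dist_param hg0 hgiso hmIcc
  -- sub-geodesic [x, p] of Gxy, geodesic from z to p
  obtain ⟨S, hSsub, hS⟩ := hGxy.sub_geodesic hGxy.left_mem hp.1
  obtain ⟨Gzp, hGzp⟩ := hGeo z p
  -- slim triangle (x, z, p) : Gxz ⊆ nbhd δ (Gzp ∪ S)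
  have hslim1 : ∀ w ∈ Gxz, Metric.infDist w (Gzp ∪ S) ≤ δ :=
    fun w hw => hyp x z p Gxz Gzp S hGxz' hGzp hS.symm hw
  -- find w' ∈ Gxy near u
  obtain ⟨v, hv, hvd⟩ := exists_near (hGzp.compact.union hS.compact)
    (hGzp.nonempty.mono subset_union_left) (hslim1 u huG)
  have hw' : ∃ w' ∈ Gxy, dist u w' ≤ δ := by
    rcases hv with hv | hv
    · -- v ∈ Gzp : impossible
      exfalso
      have hsplit : dist z v + dist v p = dist z p := hGzp.dist_add hv
      have hvnear : NearestPoint Gxy v p :=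
        nearest_extend hGxy.compact hGxy.nonempty hp hsplit
      have h1 : dist v p + dist p x ≤ dist v x + 6 * δ :=
        proj_lemma hδ hGeo hyp hGxy hvnear x hGxy.left_mem
      have h2 : dist v x ≤ dist v u + dist u x := dist_triangle _ _ _
      have h3 : dist v u = dist u v := dist_comm _ _
      have h4 : dist u x = dist x u := dist_comm _ _
      have h5 : (0:ℝ) ≤ dist v p := dist_nonneg
      rw [hxu] at h4
      linarith
    · exact ⟨v, hSsub hv, hvd⟩
  obtain ⟨w', hw'mem, hw'd⟩ := hw'
  -- |dist x w' - L/2| ≤ δ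
  have ht'1 : dist x w' ≤ L / 2 + δ := by
    have := dist_triangle x u w'
    linarith [hxu]
  have ht'2 : L / 2 - δ ≤ dist x w' := by
    have := dist_triangle x w' u
    have := dist_comm w' u
    linarith [hxu]
  -- dist r w' ≤ L/2 - c₀ + 7δ
  have hrw' : dist r w' ≤ L / 2 - dist x r + 7 * δ := by
    rw [hGxy.dist_mem_mem hr.1 hw'mem]
    rw [abs_le]
    constructor <;> linarith
  -- (†) : dist a q ≤ dist a r + L/2 - c₀ + 8δ
  have hdagger : dist a q ≤ dist a r + (L / 2 - dist x r) + 8 * δ := by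
    have h1 : dist a q ≤ dist a u := by
      rw [hq.2]; exact infDist_le_dist_of_mem huG
    have h2 : dist a u ≤ dist a w' + dist w' u := dist_triangle _ _ _
    have h3 : dist a w' ≤ dist a r + dist r w' := dist_triangle _ _ _
    have h4 : dist w' u = dist u w' := dist_comm _ _
    linarith
  -- analysis of q : slim triangle (x, z, y)
  obtain ⟨Gyz, hGyz⟩ := hGeo y z
  have hslim2 : Metric.infDist q (Gyz ∪ Gxy) ≤ δ :=
    hyp x z y Gxz Gyz Gxy hGxz' hGyz.symm hGxy.symm hq.1
  obtain ⟨v₂, hv₂, hv₂d⟩ := exists_near (hGyz.compact.union hGxy.compact)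
    (hGyz.nonempty.mono subset_union_left) hslim2
  have hqadd : dist x q + dist q z = dist x z := hGxz'.dist_add hq.1
  have hgoal : dist x q ≤ L / 2 + (100 * δ + 100) := by
    rcases hv₂ with hv₂ | hv₂
    · -- v₂ ∈ Gyz : contradiction with K₂ large
      exfalso
      have hsplit : dist y v₂ + dist v₂ z = dist y z := hGyz.dist_add hv₂
      -- four point lemma
      rcases four_point hδ hGeo hyp hGxy hr hp with hcase | hcase
      · -- dist r p ≤ 14δ is impossible
        have h1 : dist x p - dist x r ≤ dist r p := by
          rw [hGxy.dist_mem_mem hr.1 hp.1]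
          have := le_abs_self (dist x r - dist x p)
          have := neg_abs_le (dist x r - dist x p)
          linarith [neg_abs_le (dist x r - dist x p)]
        linarith
      · have h1 : dist a r + (L - dist x r) ≤ dist a y + 6 * δ := by
          have := hL1a y hGxy.right_mem
          linarith
        have h2 : dist a z ≤ dist a v₂ + dist v₂ z := dist_triangle _ _ _
        have h3 : dist a y ≤ dist a v₂ + dist v₂ y := dist_triangle _ _ _
        have h4 : dist v₂ y = dist y v₂ := dist_comm _ _
        have h5 : dist y z ≤ dist y p + dist p z := dist_triangle _ _ _
        have h6 : dist y p = dist p y := dist_comm _ _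
        have h7 : dist a v₂ ≤ dist a q + δ := by
          have := dist_triangle a q v₂; linarith
        have h8 : dist x p - dist x r ≤ dist r p := by
          rw [hGxy.dist_mem_mem hr.1 hp.1]
          linarith [neg_abs_le (dist x r - dist x p)]
        -- combine
        linarith
    · -- v₂ ∈ Gxy : the good case
      have ht₂ : dist x q - δ ≤ dist x v₂ := by
        have h := dist_triangle x v₂ q
        have h' : dist v₂ q = dist q v₂ := dist_comm _ _
        linarith
      have h1 : dist x v₂ - dist x r ≤ dist r v₂ := by
        rw [hGxy.dist_mem_mem hr.1 hv₂]
        linarith [neg_abs_le (dist x r - dist x v₂)]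
      have h2 : dist a r + dist r v₂ ≤ dist a v₂ + 6 * δ := hL1a v₂ hv₂
      have h3 : dist a v₂ ≤ dist a q + δ := by
        have := dist_triangle a q v₂; linarith
      linarith
  have : dist q x = dist x q := dist_comm q x
  linarith
end

section
/- Set K₇ = 112δ and K₆ = 2K₇ + 6δ. Let A > 0, let x be a point with ‖x‖ ≥ K₆ + 4A, and let y be a point on a geodesic [1,x] with ‖y‖ = ‖x‖ − 2K₇ − 2A. Then for any point a in the halfspace H(y,1) there is a point b in the halfspace H(1,x) with d(a,b) ≥ 2A such that H(1,x) ⊆ H(a,b). -/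
open Metric Set

lemma geo_endpoint_mem {X : Type*} [MetricSpace X] {G : Set X} {x y : X}
    (h : IsGeodesic G x y) : x ∈ G := by
  obtain ⟨f, hf0, hfd, hiso, him⟩ := h
  rw [← him]
  exact ⟨0, ⟨le_refl 0, dist_nonneg⟩, hf0⟩

lemma geo_add {X : Type*} [MetricSpace X] {G : Set X} {x y p : X}
    (h : IsGeodesic G x y) (hp : p ∈ G) : dist x p + dist p y = dist x y := by
  obtain ⟨f, hf0, hfd, hiso, him⟩ := h
  rw [← him] at hp
  obtain ⟨s, hs, rfl⟩ := hp
  have h0 : (0:ℝ) ∈ Set.Icc (0:ℝ) (dist x y) := ⟨le_refl _, dist_nonneg⟩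
  have hd : dist x y ∈ Set.Icc (0:ℝ) (dist x y) := ⟨dist_nonneg, le_refl _⟩
  have e1 : dist x (f s) = s := by
    rw [← hf0, hiso 0 h0 s hs, zero_sub, abs_neg, abs_of_nonneg hs.1]
  have e2 : dist (f s) y = dist x y - s := by
    conv_lhs => rw [← hfd]
    rw [hiso s hs (dist x y) hd, abs_of_nonpos (by linarith [hs.2]), neg_sub]
  rw [e1, e2]; ring

lemma geo_point {X : Type*} [MetricSpace X] {G : Set X} {x y : X}
    (h : IsGeodesic G x y) (t : ℝ) (h0 : 0 ≤ t) (ht : t ≤ dist x y) :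
    ∃ m ∈ G, dist x m = t ∧ dist m y = dist x y - t := by
  obtain ⟨f, hf0, hfd, hiso, him⟩ := h
  have h0' : (0:ℝ) ∈ Set.Icc (0:ℝ) (dist x y) := ⟨le_refl _, dist_nonneg⟩
  have hd : dist x y ∈ Set.Icc (0:ℝ) (dist x y) := ⟨dist_nonneg, le_refl _⟩
  have htm : t ∈ Set.Icc (0:ℝ) (dist x y) := ⟨h0, ht⟩
  refine ⟨f t, ?_, ?_, ?_⟩
  · rw [← him]; exact ⟨t, htm, rfl⟩
  · rw [← hf0, hiso 0 h0' t htm, zero_sub, abs_neg, abs_of_nonneg h0]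
  · conv_lhs => rw [← hfd]
    rw [hiso t htm (dist x y) hd, abs_of_nonpos (by linarith), neg_sub]

/-- Four-point hyperbolicity inequality (for doubled Gromov products) derived
from slim triangles. -/
lemma gp4 {X : Type*} [MetricSpace X] {δ : ℝ} (hδ : 0 ≤ δ)
    (hGeo : GeodesicSpace X) (hyp : SlimTriangles δ X) (e u v w : X) :
    min (dist e u + dist e v - dist u v) (dist e v + dist e w - dist v w)
      ≤ dist e u + dist e w - dist u w + 6 * δ := by
  obtain ⟨Guw, hGuw⟩ := hGeo u w
  obtain ⟨Gwe, hGwe⟩ := hGeo w e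
  obtain ⟨Geu, hGeu⟩ := hGeo e u
  obtain ⟨Gwv, hGwv⟩ := hGeo w v
  obtain ⟨Gvu, hGvu⟩ := hGeo v u
  set s : ℝ := (dist u e + dist u w - dist e w)/2 with hs
  have hs0 : 0 ≤ s := by
    simp only [hs]
    linarith [dist_triangle e u w, dist_comm u e]
  have hs1 : s ≤ dist u w := by
    simp only [hs]
    linarith [dist_triangle u w e, dist_comm w e]
  obtain ⟨m, hmG, hum, hmw⟩ := geo_point hGuw s hs0 hs1
  apply le_of_forall_pos_le_add
  intro ε hε
  have hε6 : 0 < ε/6 := by linarith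
  have hne1 : (Gwe ∪ Geu).Nonempty := ⟨w, Or.inl (geo_endpoint_mem hGwe)⟩
  have hne2 : (Gwv ∪ Gvu).Nonempty := ⟨w, Or.inl (geo_endpoint_mem hGwv)⟩
  have h1 : infDist m (Gwe ∪ Geu) ≤ δ := hyp u w e Guw Gwe Geu hGuw hGwe hGeu hmG
  have h2 : infDist m (Gwv ∪ Gvu) ≤ δ := hyp u w v Guw Gwv Gvu hGuw hGwv hGvu hmG
  obtain ⟨p, hp, hpd⟩ := (Metric.infDist_lt_iff hne1).mp
    (lt_of_le_of_lt h1 (by linarith : δ < δ + ε/6))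
  obtain ⟨q, hq, hqd⟩ := (Metric.infDist_lt_iff hne2).mp
    (lt_of_le_of_lt h2 (by linarith : δ < δ + ε/6))
  have hem : dist e m ≤ (dist e u + dist e w - dist u w)/2 + 2*(δ + ε/6) := by
    rcases hp with hp | hp
    · -- p on the side from w to e
      have hadd := geo_add hGwe hp
      have t1 : dist m w ≤ dist m p + dist p w := dist_triangle m p w
      have t2 : dist e m ≤ dist e p + dist p m := dist_triangle e p m
      simp only [hs] at hmw
      linarith [dist_comm p w, dist_comm e p, dist_comm p m, dist_comm w e,
        dist_comm u e, dist_comm e w, hpd, t1, t2, hadd, hmw]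
    · -- p on the side from e to u
      have hadd := geo_add hGeu hp
      have t1 : dist u m ≤ dist u p + dist p m := dist_triangle u p m
      have t2 : dist e m ≤ dist e p + dist p m := dist_triangle e p m
      simp only [hs] at hum
      linarith [dist_comm p u, dist_comm u p, dist_comm p m, dist_comm m p,
        dist_comm u e, dist_comm e w, hpd, t1, t2, hadd, hum]
  have hqm : dist e q ≤ dist e m + (δ + ε/6) := by
    linarith [dist_triangle e m q, hqd, dist_comm m q]
  have hq' : min (dist e u + dist e v - dist u v) (dist e v + dist e w - dist v w)
      ≤ 2 * dist e q := by
    rcases hq with hq | hq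
    · -- q on the side from w to v
      have hadd := geo_add hGwv hq
      refine le_trans (min_le_right _ _) ?_
      linarith [dist_triangle e q v, dist_triangle e q w, dist_comm q w,
        dist_comm v w]
    · -- q on the side from v to u
      have hadd := geo_add hGvu hq
      refine le_trans (min_le_left _ _) ?_
      linarith [dist_triangle e q v, dist_triangle e q u, dist_comm q v,
        dist_comm u v]
  linarith

/-- Set K₇ = 112δ and K₆ = 2K₇ + 6δ. Let A > 0, x with ‖x‖ ≥ K₆ + 4A, and
y a point on a geodesic [1,x] with ‖y‖ = ‖x‖ − 2K₇ − 2A. Then for any a ∈ H(y,1) there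
is b ∈ H(1,x) with d(a,b) ≥ 2A such that H(1,x) ⊆ H(a,b). -/
theorem stmt_15 {X : Type*} [MetricSpace X] (δ : ℝ) (hδ : 0 ≤ δ)
    (hGeo : GeodesicSpace X) (hyp : SlimTriangles δ X)
    (e x : X) (A : ℝ) (hA : 0 < A)
    (hx : (2 * (112 * δ) + 6 * δ) + 4 * A ≤ dist e x)
    (Gex : Set X) (hGex : IsGeodesic Gex e x)
    (y : X) (hy : y ∈ Gex) (hyd : dist e y = dist e x - 2 * (112 * δ) - 2 * A) :
    ∀ a ∈ Halfspace y e, ∃ b ∈ Halfspace e x,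
      2 * A ≤ dist a b ∧ Halfspace e x ⊆ Halfspace a b := by
  intro a ha
  have ha' : dist a e ≤ dist a y := ha
  have hsum := geo_add hGex hy   -- dist e y + dist y x = dist e x
  obtain ⟨b, hbG, hbe, hbx⟩ := geo_point hGex (dist e x / 2 + A)
    (by linarith) (by linarith)
  -- hbe : dist e b = dist e x / 2 + A ; hbx : dist b x = dist e x - (dist e x / 2 + A)
  have h1 := gp4 hδ hGeo hyp e a x y
  have hax : dist e a + dist e x - dist a x ≤ dist e y + 6*δ := by
    rcases min_le_iff.mp h1 with h | h
    · linarith [dist_comm a e, dist_comm e a, ha']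
    · exfalso
      linarith [dist_comm x y, dist_comm e a, dist_comm a e, ha', hyd]
  refine ⟨b, ?_, ?_, ?_⟩
  · show dist b x ≤ dist b e
    linarith [dist_comm e b, hbe, hbx, hA]
  · -- 2A ≤ dist a b
    have h4 := gp4 hδ hGeo hyp e a b x
    rcases min_le_iff.mp h4 with h | h
    · linarith [dist_triangle e a b, hax, hbe, hyd, hδ]
    · exfalso
      linarith [hax, hbe, hbx, hyd, hA, hδ]
  · intro w hw
    have hw' : dist w x ≤ dist w e := hw
    show dist w b ≤ dist w a
    have h2 := gp4 hδ hGeo hyp e a w x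
    have haw : dist e a + dist e w - dist a w ≤ dist e y + 12*δ := by
      rcases min_le_iff.mp h2 with h | h
      · linarith [hax]
      · exfalso
        linarith [hax, hyd, dist_comm w e, hw', hA, hδ]
    have h3 := gp4 hδ hGeo hyp e w x b
    have hwb : dist e x ≤ dist e w + dist e b - dist w b + 6*δ := by
      rcases min_le_iff.mp h3 with h | h
      · linarith [dist_comm w e, hw']
      · linarith [hbe, hbx, dist_comm x b, hA]
    linarith [haw, hwb, hbe, hyd, dist_triangle e a w, dist_comm a w, hδ]
end
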